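/- Antipode identity: for every levelled forest f with n = ‖f‖ ≥ 1, one has Σ_{p=0}^{n} (−1)^p Σ_{s ∈ Sh(p, n−p)} s·((c_p·f_-^p) # f_+^p) = 0 and Σ_{p=0}^{n} (−1)^{n−p} Σ_{s ∈ Sh(p, n−p)} s·(f_-^p # (c_{n−p}·f_+^p)) = 0 in ℂLF; that is, the map S(f) = (−1)^{‖f‖} c_{‖f‖}·f is a two-sided antipode for the bialgebra (ℂLF, ∇, Δ). -/

import Mathlib

/-- The free complex vector space on the set of levelled forests, encoded as lists of the
blocks of the one-line word of the underlying permutation. -/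
abbrev CLF : Type := (List (List ℕ)) →₀ ℂ

/-- `B` encodes a genuine levelled forest: a nonempty list of blocks whose concatenation
is a permutation word of `{1,…,n}`, `n = ‖f‖`. -/
def IsLF (B : List (List ℕ)) : Prop :=
  B ≠ [] ∧ List.Perm B.flatten (List.range' 1 B.flatten.length)

/-- `η ∈ S_N` is an `(a, N-a)`-shuffle. -/
def IsShuffle {N : ℕ} (a : ℕ) (η : Equiv.Perm (Fin N)) : Prop :=
  ∀ i j : Fin N, i < j → ((j : ℕ) < a ∨ a ≤ (i : ℕ)) → η i < η j

instance {N a : ℕ} : DecidablePred (fun η : Equiv.Perm (Fin N) => IsShuffle a η) :=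
  fun η => by unfold IsShuffle; infer_instance

/-- The finite set `Sh(a, N-a)` of `(a, N-a)`-shuffles inside `S_N`. -/
def shuffles (N a : ℕ) : Finset (Equiv.Perm (Fin N)) :=
  Finset.univ.filter (fun η => IsShuffle a η)

/-- The action of `α ∈ S_N` on a (one-based) letter. -/
def relabel {N : ℕ} (α : Equiv.Perm (Fin N)) (ℓ : ℕ) : ℕ :=
  if h : ℓ - 1 < N then (α ⟨ℓ - 1, h⟩ : ℕ) + 1 else ℓ

/-- The left action `α · (σ, c) = (α∘σ, c)` of a permutation on a levelled forest word. -/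
def relabelF {N : ℕ} (α : Equiv.Perm (Fin N)) (B : List (List ℕ)) : List (List ℕ) :=
  B.map (List.map (relabel α))

/-- Shift all letters of a forest word by `n`. -/
def shiftF (n : ℕ) (B : List (List ℕ)) : List (List ℕ) :=
  B.map (List.map (· + n))

/-- The lower part `f_-^p` of the horizontal splitting at level `p`. -/
def lowerW (p : ℕ) (B : List (List ℕ)) : List (List ℕ) :=
  B.map (List.filter (fun a => decide (a ≤ p)))

/-- Split a block at its letters `≤ p` (removed letters acting as separators, empty
segments kept), subtracting `p` from the remaining letters. -/
def splitUpper (p : ℕ) : List ℕ → List (List ℕ)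
  | [] => [[]]
  | a :: l =>
    if a ≤ p then [] :: splitUpper p l
    else
      match splitUpper p l with
      | [] => [[a - p]]
      | s :: rest => ((a - p) :: s) :: rest

/-- The upper part `f_+^p` of the horizontal splitting at level `p`. -/
def upperW (p : ℕ) (B : List (List ℕ)) : List (List ℕ) :=
  (B.map (splitUpper p)).flatten

/-- Interleave the letters of a block of `f` with the blocks of `g` on its leaves. -/
def interleave : List ℕ → List (List ℕ) → List ℕ
  | [], ws => ws.flatten
  | a :: as, [] => a :: interleave as []
  | a :: as, w :: ws => w ++ a :: interleave as ws

/-- Graft the blocks `ws` of (the shifted) `g` onto the successive trees of `f`. -/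
def graftAux : List (List ℕ) → List (List ℕ) → List (List ℕ)
  | [], _ => []
  | blk :: rest, ws =>
    interleave blk (ws.take (blk.length + 1)) :: graftAux rest (ws.drop (blk.length + 1))

/-- The horizontal grafting `f # g` of levelled forests (`nt(g) = |f|`). -/
def graftW (F G : List (List ℕ)) : List (List ℕ) :=
  graftAux F (shiftF F.flatten.length G)

/-!
Splitting a levelled forest `f` at level `p` and grafting the two parts back together
restores `f`, so `(c_p · f_-^p) # f_+^p = γ_p · f`, where `γ_p` reverses the letters `1, …, p`,
and `f_-^p # (c_{n-p} · f_+^p) = δ_p · f`, where `δ_p` reverses the letters `p + 1, …, n`.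
As `η` runs over the `(p, n - p)`-shuffles, both `η ∘ γ_p` and `c_n ∘ η ∘ δ_p` run over the
permutations that decrease on the first `p` positions and increase on the others ("valleys at
`p`"). A permutation is a valley at `p` only for `p = m` and `p = m + 1`, where `m` is the
position of its minimum, and then at both; so each permutation contributes two cancelling
terms to the alternating sum over `p`.
-/

theorem strictMonoOn_iff_strictAntiOn_comp {α β : Type*} [Preorder α] [Preorder β]
    {f : α → β} {g : α → α} {s : Set α} (hg : StrictAntiOn g s) (hgs : Set.MapsTo g s s)
    (hgg : ∀ x ∈ s, g (g x) = x) : StrictMonoOn f s ↔ StrictAntiOn (f ∘ g) s :=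
  ⟨fun hf => hf.comp_strictAntiOn hg hgs,
    fun hfg => (hfg.comp hg hgs).congr fun x hx => by simp [hgg x hx]⟩

theorem Fin.strictAntiOn_rev_comp_iff {α : Type*} [Preorder α] {n : ℕ} {f : α → Fin n}
    {s : Set α} : StrictAntiOn (Fin.rev ∘ f) s ↔ StrictMonoOn f s :=
  ⟨fun h => (Fin.rev_strictAnti.comp_strictAntiOn h).congr fun x _ => by simp,
    Fin.rev_strictAnti.comp_strictMonoOn⟩

theorem Fin.strictMonoOn_rev_comp_iff {α : Type*} [Preorder α] {n : ℕ} {f : α → Fin n}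
    {s : Set α} : StrictMonoOn (Fin.rev ∘ f) s ↔ StrictAntiOn f s :=
  ⟨fun h => (Fin.rev_strictAnti.comp_strictMonoOn h).congr fun x _ => by simp,
    Fin.rev_strictAnti.comp_strictAntiOn⟩

/-- Reverses the positions `a, …, b - 1`; the identity if `n < b`. -/
def revIco (n a b : ℕ) : Equiv.Perm (Fin n) :=
  Function.Involutive.toPerm
    (fun i => if h : a ≤ (i : ℕ) ∧ (i : ℕ) < b ∧ b ≤ n then ⟨a + b - 1 - i, by omega⟩ else i)
    fun i => by beta_reduce; split_ifs <;> ext <;> simp_all <;> omega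

section revIco

variable {n a b : ℕ}

theorem revIco_apply (i : Fin n) : revIco n a b i =
    if h : a ≤ (i : ℕ) ∧ (i : ℕ) < b ∧ b ≤ n then ⟨a + b - 1 - i, by omega⟩ else i := rfl

theorem revIco_revIco (i : Fin n) : revIco n a b (revIco n a b i) = i :=
  Function.Involutive.toPerm_involutive _ i

theorem revIco_val (hb : b ≤ n) (i : Fin n) :
    (revIco n a b i : ℕ) = if a ≤ (i : ℕ) ∧ (i : ℕ) < b then a + b - 1 - i else i := by
  rw [revIco_apply]
  split_ifs <;> simp_all

theorem revIco_of_lt {i : Fin n} (hi : (i : ℕ) < a) : revIco n a b i = i := by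
  rw [revIco_apply, dif_neg (by omega)]

theorem revIco_of_le {i : Fin n} (hi : b ≤ (i : ℕ)) : revIco n a b i = i := by
  rw [revIco_apply, dif_neg (by omega)]

theorem strictAntiOn_revIco (hb : b ≤ n) :
    StrictAntiOn (revIco n a b) {i | a ≤ (i : ℕ) ∧ (i : ℕ) < b} := by
  intro i hi j hj hij
  rw [Set.mem_ofPred_eq] at hi hj
  rw [Fin.lt_def] at hij ⊢
  rw [revIco_val hb, revIco_val hb, if_pos hi, if_pos hj]
  omega

theorem mapsTo_revIco (hb : b ≤ n) :
    Set.MapsTo (revIco n a b) {i | a ≤ (i : ℕ) ∧ (i : ℕ) < b}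
      {i | a ≤ (i : ℕ) ∧ (i : ℕ) < b} := by
  intro i hi
  rw [Set.mem_ofPred_eq] at hi ⊢
  rw [revIco_val hb, if_pos hi]
  omega

end revIco

theorem mem_shuffles {n p : ℕ} {η : Equiv.Perm (Fin n)} : η ∈ shuffles n p ↔ IsShuffle p η := by
  simp [shuffles]

theorem isShuffle_iff_strictMonoOn {n p : ℕ} {η : Equiv.Perm (Fin n)} :
    IsShuffle p η ↔ StrictMonoOn η {i | (i : ℕ) < p} ∧ StrictMonoOn η {i | p ≤ (i : ℕ)} := by
  refine ⟨fun h => ⟨fun i _ j hj hij => h i j hij (.inl hj),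
    fun i hi j _ hij => h i j hij (.inr hi)⟩, fun h i j hij hij' => ?_⟩
  rcases hij' with hj | hi
  · exact h.1 (lt_trans (Fin.lt_def.mp hij) hj) hj hij
  · exact h.2 hi (le_trans hi (Fin.le_def.mp hij.le)) hij

def IsValley {n : ℕ} {β : Type*} [Preorder β] (p : ℕ) (w : Fin n → β) : Prop :=
  StrictAntiOn w {i | (i : ℕ) < p} ∧ StrictMonoOn w {i | p ≤ (i : ℕ)}

instance {n p : ℕ} {β : Type*} [LinearOrder β] (w : Fin n → β) : Decidable (IsValley p w) := by
  unfold IsValley StrictAntiOn StrictMonoOn; infer_instance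

def valleys (n p : ℕ) : Finset (Equiv.Perm (Fin n)) :=
  Finset.univ.filter fun w => IsValley p ⇑w

theorem mem_valleys {n p : ℕ} {w : Equiv.Perm (Fin n)} : w ∈ valleys n p ↔ IsValley p ⇑w := by
  simp [valleys]

theorem isShuffle_iff_isValley_mul_revIco_zero {n p : ℕ} (hp : p ≤ n) (η : Equiv.Perm (Fin n)) :
    IsShuffle p η ↔ IsValley p ⇑(η * revIco n 0 p) := by
  have hlow : {i : Fin n | (i : ℕ) < p} = {i : Fin n | 0 ≤ (i : ℕ) ∧ (i : ℕ) < p} := by simp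
  rw [isShuffle_iff_strictMonoOn, IsValley, Equiv.Perm.coe_mul, hlow,
    strictMonoOn_iff_strictAntiOn_comp (strictAntiOn_revIco hp) (mapsTo_revIco hp)
      fun i _ => revIco_revIco i]
  refine and_congr_right' ⟨fun h => h.congr fun i hi => ?_, fun h => h.congr fun i hi => ?_⟩
  all_goals simp [revIco_of_le (show p ≤ (i : ℕ) from hi)]

theorem isShuffle_iff_isValley_revPerm_mul_mul_revIco_self {n p : ℕ} (η : Equiv.Perm (Fin n)) :
    IsShuffle p η ↔ IsValley p ⇑((Fin.revPerm : Equiv.Perm (Fin n)) * η * revIco n p n) := by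
  have hup : {i : Fin n | p ≤ (i : ℕ)} = {i : Fin n | p ≤ (i : ℕ) ∧ (i : ℕ) < n} := by
    ext i; simp
  have hcomp : ⇑((Fin.revPerm : Equiv.Perm (Fin n)) * η * revIco n p n) =
      Fin.rev ∘ (η ∘ revIco n p n) := by
    ext i; simp
  rw [isShuffle_iff_strictMonoOn, IsValley, hcomp, Fin.strictMonoOn_rev_comp_iff,
    Fin.strictAntiOn_rev_comp_iff, hup,
    strictMonoOn_iff_strictAntiOn_comp (strictAntiOn_revIco le_rfl) (mapsTo_revIco le_rfl)
      fun i _ => revIco_revIco i]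
  refine and_congr_left' ⟨fun h => h.congr fun i hi => ?_, fun h => h.congr fun i hi => ?_⟩
  all_goals simp [revIco_of_lt (show (i : ℕ) < p from hi)]

section Valley

variable {n : ℕ} {β : Type*} [LinearOrder β] {w : Fin n → β} {m : Fin n}

theorem IsValley.eq_or_eq_add_one {p : ℕ} (h : IsValley p w) (hm : ∀ i, w m ≤ w i)
    (hp : p ≤ n) : p = m ∨ p = m + 1 := by
  by_contra hne
  rcases lt_or_gt_of_ne (show p ≠ m by omega) with hlt | hgt
  · have hprev : (m : ℕ) - 1 < n := by omega
    have := h.2 (show p ≤ (m : ℕ) - 1 by omega) (show p ≤ (m : ℕ) by omega)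
      (show (⟨m - 1, hprev⟩ : Fin n) < m from Fin.lt_def.mpr (by simp; omega))
    exact (this.trans_le (hm _)).false
  · have hnext : (m : ℕ) + 1 < n := by omega
    have := h.1 (show (m : ℕ) < p by omega) (show (m : ℕ) + 1 < p by omega)
      (show m < (⟨m + 1, hnext⟩ : Fin n) from Fin.lt_def.mpr (by simp))
    exact (this.trans_le (hm _)).false

theorem isValley_add_one_iff (hw : Function.Injective w) (hm : ∀ i, w m ≤ w i) :
    IsValley (m + 1) w ↔ IsValley m w := by
  have hmin : ∀ i, i ≠ m → w m < w i := fun i hi => (hm i).lt_of_ne (hw.ne hi.symm)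
  simp only [IsValley, StrictAntiOn, StrictMonoOn, Set.mem_ofPred_eq]
  constructor
  · rintro ⟨hdec, hinc⟩
    refine ⟨fun i hi j hj hij => hdec (by omega) (by omega) hij, fun i hi j hj hij => ?_⟩
    rcases eq_or_ne i m with rfl | him
    · exact hmin j hij.ne'
    · have := Fin.val_injective.ne him
      exact hinc (by omega) (by omega) hij
  · rintro ⟨hdec, hinc⟩
    refine ⟨fun i hi j hj hij => ?_, fun i hi j hj hij => hinc (by omega) (by omega) hij⟩
    rcases eq_or_ne j m with rfl | hjm
    · exact hmin i hij.ne
    · have := Fin.val_injective.ne hjm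
      exact hdec (by omega) (by omega) hij

end Valley

theorem sum_range_ite_isValley_eq_zero {R β : Type*} [Ring R] [LinearOrder β] {n : ℕ}
    {w : Fin n → β} (hw : Function.Injective w) {m : Fin n} (hm : ∀ i, w m ≤ w i)
    (ε : ℕ → R) (hε : ∀ p < n, ε (p + 1) = -ε p) :
    ∑ p ∈ Finset.range (n + 1), (if IsValley p w then ε p else 0) = 0 := by
  rw [Finset.sum_eq_add_of_mem (m : ℕ) (m + 1) (by simp) (by simp) (by omega)
    fun p hp hpm => if_neg fun h => by
      have := h.eq_or_eq_add_one hm (by simpa [Nat.lt_succ_iff] using hp)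
      omega]
  simp only [isValley_add_one_iff hw hm, hε m m.isLt]
  split_ifs <;> simp

theorem sum_smul_sum_valleys_eq_zero {R M : Type*} [Ring R] [AddCommGroup M] [Module R M]
    {n : ℕ} (hn : 1 ≤ n) (ε : ℕ → R) (hε : ∀ p < n, ε (p + 1) = -ε p)
    (G : Equiv.Perm (Fin n) → M) :
    ∑ p ∈ Finset.range (n + 1), ε p • ∑ w ∈ valleys n p, G w = 0 := by
  simp only [valleys, Finset.smul_sum, Finset.sum_filter]
  rw [Finset.sum_comm]
  refine Finset.sum_eq_zero fun w _ => ?_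
  simp only [smul_ite, smul_zero, ← ite_zero_smul, ← Finset.sum_smul]
  have hmin : ∀ i, w (w.symm ⟨0, hn⟩) ≤ w i := fun i => by simp [Fin.le_def]
  rw [sum_range_ite_isValley_eq_zero w.injective hmin ε hε, zero_smul]

theorem sum_shuffles_mul_revIco_zero {M : Type*} [AddCommMonoid M] {n p : ℕ} (hp : p ≤ n)
    (G : Equiv.Perm (Fin n) → M) :
    ∑ η ∈ shuffles n p, G (η * revIco n 0 p) = ∑ w ∈ valleys n p, G w :=
  Finset.sum_equiv (Equiv.mulRight (revIco n 0 p))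
    (fun η => by simp [mem_shuffles, mem_valleys, isShuffle_iff_isValley_mul_revIco_zero hp])
    fun _ _ => rfl

theorem sum_shuffles_mul_revIco_self {M : Type*} [AddCommMonoid M] {n p : ℕ}
    (G : Equiv.Perm (Fin n) → M) :
    ∑ η ∈ shuffles n p, G (η * revIco n p n) =
      ∑ w ∈ valleys n p, G ((Fin.revPerm : Equiv.Perm (Fin n)) * w) :=
  Finset.sum_equiv ((Equiv.mulLeft Fin.revPerm).trans (Equiv.mulRight (revIco n p n)))
    (fun η => by
      simp [mem_shuffles, mem_valleys, isShuffle_iff_isValley_revPerm_mul_mul_revIco_self])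
    fun η _ => congrArg G (Equiv.ext fun i => by simp)

theorem relabel_mul {N : ℕ} (α β : Equiv.Perm (Fin N)) (ℓ : ℕ) :
    relabel (α * β) ℓ = relabel α (relabel β ℓ) := by
  unfold relabel
  split_ifs with h h' <;> simp_all

theorem relabelF_mul {N : ℕ} (α β : Equiv.Perm (Fin N)) (B : List (List ℕ)) :
    relabelF (α * β) B = relabelF α (relabelF β B) := by
  simp [relabelF, Function.comp_def, relabel_mul]

theorem interleave_cons_cons (xs : List ℕ) (b : ℕ) (w : List ℕ) (ws : List (List ℕ)) :
    interleave xs ((b :: w) :: ws) = b :: interleave xs (w :: ws) := by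
  cases xs <;> simp [interleave]

theorem splitUpper_ne_nil (p : ℕ) (l : List ℕ) : splitUpper p l ≠ [] := by
  induction l with
  | nil => simp [splitUpper]
  | cons a t ih =>
    rw [splitUpper]
    split
    · simp
    · cases splitUpper p t <;> simp

theorem length_splitUpper (p : ℕ) (l : List ℕ) :
    (splitUpper p l).length = (l.filter (· ≤ p)).length + 1 := by
  induction l with
  | nil => simp [splitUpper]
  | cons a t ih =>
    by_cases h : a ≤ p
    · simp [splitUpper, h, ih]
    · obtain ⟨s, rest, hs⟩ := List.exists_cons_of_ne_nil (splitUpper_ne_nil p t)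
      rw [hs, List.length_cons] at ih
      simp [splitUpper, h, hs, ← ih]

theorem interleave_map_filter_map_splitUpper (p : ℕ) (f g : ℕ → ℕ) (l : List ℕ) :
    interleave ((l.filter (· ≤ p)).map f) ((splitUpper p l).map (List.map g)) =
      l.map fun a => if a ≤ p then f a else g (a - p) := by
  induction l with
  | nil => simp [splitUpper, interleave]
  | cons a t ih =>
    by_cases h : a ≤ p
    · simp [splitUpper, h, interleave, ih]
    · obtain ⟨s, rest, hs⟩ := List.exists_cons_of_ne_nil (splitUpper_ne_nil p t)
      rw [hs] at ih
      simp only [List.map_cons] at ih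
      simp [splitUpper, h, hs, interleave_cons_cons, ih]

theorem graftAux_map_flatten_map (f : List ℕ → List ℕ) (g : List ℕ → List (List ℕ))
    (hfg : ∀ l, (g l).length = (f l).length + 1) (B : List (List ℕ)) :
    graftAux (B.map f) (B.map g).flatten = B.map fun l => interleave (f l) (g l) := by
  induction B with
  | nil => simp [graftAux]
  | cons l B ih =>
    simp only [List.map_cons, List.flatten_cons, graftAux]
    rw [List.take_left' (hfg l), List.drop_left' (hfg l), ih]

theorem graftW_map_lowerW_map_upperW (p : ℕ) (f g : ℕ → ℕ) (F : List (List ℕ)) :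
    graftW ((lowerW p F).map (List.map f)) ((upperW p F).map (List.map g)) =
      F.map (List.map fun a =>
        if a ≤ p then f a else g (a - p) + (lowerW p F).flatten.length) := by
  set q := (lowerW p F).flatten.length
  have hlen : ((lowerW p F).map (List.map f)).flatten.length = q := by
    rw [← List.map_flatten, List.length_map]
  have hshift : shiftF q ((upperW p F).map (List.map g)) =
      (F.map fun l => (splitUpper p l).map (List.map (g · + q))).flatten := by
    simp [shiftF, upperW, List.map_flatten, Function.comp_def]
  rw [graftW, hlen, hshift, lowerW, List.map_map,
    graftAux_map_flatten_map _ _ fun l => by simp [length_splitUpper]]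
  exact List.map_congr_left fun l _ => interleave_map_filter_map_splitUpper p f _ l

theorem filter_le_range'_one {n p : ℕ} (hp : p ≤ n) :
    (List.range' 1 n).filter (· ≤ p) = List.range' 1 p := by
  obtain ⟨k, rfl⟩ := Nat.exists_eq_add_of_le hp
  rw [← List.range'_append (step := 1), List.filter_append,
    List.filter_eq_self.mpr fun a ha => by simp at ha ⊢; omega,
    List.filter_eq_nil_iff.mpr fun a ha => by simp at ha ⊢; omega, List.append_nil]

theorem IsLF.length_flatten_lowerW {F : List (List ℕ)} (hF : IsLF F) {p : ℕ}
    (hp : p ≤ F.flatten.length) : (lowerW p F).flatten.length = p := by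
  rw [lowerW, ← List.filter_flatten, (hF.2.filter _).length_eq, filter_le_range'_one hp,
    List.length_range']

theorem IsLF.one_le_of_mem_flatten {F : List (List ℕ)} (hF : IsLF F) {a : ℕ}
    (ha : a ∈ F.flatten) : 1 ≤ a :=
  (List.mem_range'_1.mp (hF.2.mem_iff.mp ha)).1

theorem map_map_congr_of_mem_flatten {F : List (List ℕ)} {f g : ℕ → ℕ}
    (h : ∀ a ∈ F.flatten, f a = g a) : F.map (List.map f) = F.map (List.map g) :=
  List.map_congr_left fun l hl =>
    List.map_congr_left fun a ha => h a (List.mem_flatten.mpr ⟨l, hl, ha⟩)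

theorem relabel_revIco_zero {n p ℓ : ℕ} (hp : p ≤ n) (h1 : 1 ≤ ℓ) :
    relabel (revIco n 0 p) ℓ =
      if ℓ ≤ p then relabel (Fin.revPerm : Equiv.Perm (Fin p)) ℓ else ℓ := by
  simp only [relabel, revIco_val hp, Fin.revPerm_apply, Fin.val_rev]
  split_ifs <;> omega

theorem relabel_revIco_self {n p ℓ : ℕ} (h1 : 1 ≤ ℓ) :
    relabel (revIco n p n) ℓ =
      if ℓ ≤ p then ℓ else relabel (Fin.revPerm : Equiv.Perm (Fin (n - p))) (ℓ - p) + p := by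
  simp only [relabel, revIco_val le_rfl, Fin.revPerm_apply, Fin.val_rev]
  split_ifs <;> omega

theorem IsLF.graftW_revPerm_lowerW_upperW {F : List (List ℕ)} (hF : IsLF F) {p : ℕ}
    (hp : p ≤ F.flatten.length) :
    graftW (relabelF (Fin.revPerm : Equiv.Perm (Fin p)) (lowerW p F)) (upperW p F) =
      relabelF (revIco F.flatten.length 0 p) F := by
  have h := graftW_map_lowerW_map_upperW p (relabel (Fin.revPerm : Equiv.Perm (Fin p))) id F
  rw [List.map_id_fun, List.map_id, hF.length_flatten_lowerW hp] at h
  rw [relabelF, h, relabelF]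
  refine map_map_congr_of_mem_flatten fun a ha => ?_
  rw [relabel_revIco_zero hp (hF.one_le_of_mem_flatten ha)]
  split_ifs with hap
  · rfl
  · exact Nat.sub_add_cancel (by omega)

theorem IsLF.graftW_lowerW_revPerm_upperW {F : List (List ℕ)} (hF : IsLF F) {p : ℕ}
    (hp : p ≤ F.flatten.length) :
    graftW (lowerW p F)
        (relabelF (Fin.revPerm : Equiv.Perm (Fin (F.flatten.length - p))) (upperW p F)) =
      relabelF (revIco F.flatten.length p F.flatten.length) F := by
  have h := graftW_map_lowerW_map_upperW p id
    (relabel (Fin.revPerm : Equiv.Perm (Fin (F.flatten.length - p)))) F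
  rw [List.map_id_fun, List.map_id, hF.length_flatten_lowerW hp] at h
  rw [relabelF, h, relabelF]
  refine map_map_congr_of_mem_flatten fun a ha => ?_
  rw [relabel_revIco_self (hF.one_le_of_mem_flatten ha)]
  split_ifs <;> rfl

/-- antipode identity: for every levelled forest `f` with `n = ‖f‖ ≥ 1`,
`Σ_{p=0}^{n} (−1)^p Σ_{s ∈ Sh(p, n−p)} s·((c_p·f_-^p) # f_+^p) = 0` and
`Σ_{p=0}^{n} (−1)^{n−p} Σ_{s ∈ Sh(p, n−p)} s·(f_-^p # (c_{n−p}·f_+^p)) = 0` in `ℂLF`;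
that is, `S(f) = (−1)^{‖f‖} c_{‖f‖}·f` is a two-sided antipode for `(ℂLF, ∇, Δ)`.
(Here `c_p` is the order-reversing permutation `Fin.revPerm`.) -/
theorem antipode_identity (F : List (List ℕ)) (hF : IsLF F)
    (hn : 1 ≤ F.flatten.length) :
    (∑ p ∈ Finset.range (F.flatten.length + 1), ((-1 : ℂ) ^ p) •
        ∑ η ∈ shuffles F.flatten.length p,
          Finsupp.single (relabelF η
            (graftW (relabelF (Fin.revPerm : Equiv.Perm (Fin p)) (lowerW p F))
              (upperW p F))) (1 : ℂ)) = (0 : CLF) ∧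
    (∑ p ∈ Finset.range (F.flatten.length + 1),
        ((-1 : ℂ) ^ (F.flatten.length - p)) •
        ∑ η ∈ shuffles F.flatten.length p,
          Finsupp.single (relabelF η
            (graftW (lowerW p F)
              (relabelF (Fin.revPerm : Equiv.Perm (Fin (F.flatten.length - p)))
                (upperW p F)))) (1 : ℂ)) = (0 : CLF) := by
  set n := F.flatten.length
  let G : Equiv.Perm (Fin n) → CLF := fun w => Finsupp.single (relabelF w F) 1
  have hle : ∀ p ∈ Finset.range (n + 1), p ≤ n := fun p hp =>
    Nat.lt_succ_iff.mp (Finset.mem_range.mp hp)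
  constructor
  · calc _ = ∑ p ∈ Finset.range (n + 1), ((-1 : ℂ) ^ p) • ∑ w ∈ valleys n p, G w := by
          refine Finset.sum_congr rfl fun p hp => ?_
          simp only [hF.graftW_revPerm_lowerW_upperW (hle p hp), ← relabelF_mul]
          rw [sum_shuffles_mul_revIco_zero (hle p hp) G]
      _ = 0 := sum_smul_sum_valleys_eq_zero hn _ (fun p _ => by rw [pow_succ, mul_neg_one]) G
  · calc _ = ∑ p ∈ Finset.range (n + 1), ((-1 : ℂ) ^ (n - p)) •
            ∑ w ∈ valleys n p, G (Fin.revPerm * w) := by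
          refine Finset.sum_congr rfl fun p hp => ?_
          simp only [hF.graftW_lowerW_revPerm_upperW (hle p hp), ← relabelF_mul]
          rw [sum_shuffles_mul_revIco_self G]
      _ = 0 := sum_smul_sum_valleys_eq_zero hn _ (fun p hp => by
          rw [show n - p = n - (p + 1) + 1 by omega, pow_succ, mul_neg_one, neg_neg]) _
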